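/- For every n ∈ ℕ and x_n ∈ X_n, the set Γ_n(x_n) ⊂ Y^ℕ is nonempty and closed in the product topology. -/

import Mathlib

set_option linter.unusedSectionVars false
set_option linter.unusedVariables false

variable {Y : Type}

/-- Iterated embedding φ_{n,m} : X m → X n for m ≤ n. -/
def phiTo (X : ℕ → Type) (φs : ∀ n, X n → X (n + 1)) {m n : ℕ} (h : m ≤ n) (x : X m) : X n :=
  Nat.leRecOn h (fun {k} x => φs k x) x

/-- Iterated projection π_{m,q} : Yᵐ × X q → X (q+m), the head of the word acting outermost. -/
def piFin (X : ℕ → Type) (πo : ∀ n, Y → X n → X (n + 1)) :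
    ∀ (m q : ℕ), (Fin m → Y) → X q → X (q + m)
  | 0, _, _, x => x
  | m + 1, q, y, x => πo (q + m) (y 0) (piFin X πo m q (fun i => y i.succ) x)

/-- Iterated projection π_{m,0} : Yᵐ × X 0 → X m. -/
def piFin0 (X : ℕ → Type) (πo : ∀ n, Y → X n → X (n + 1)) :
    ∀ (m : ℕ), (Fin m → Y) → X 0 → X m
  | 0, _, x => x
  | m + 1, y, x => πo m (y 0) (piFin0 X πo m (fun i => y i.succ) x)

/-- The set Γ_n(x_n) ⊂ Y^ℕ : all infinite addresses y such that for every p ≥ n the point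
φ_{p,n}(x_n) lies in the cell C(y₁,…,y_p) = π_{p,0}({(y₁,…,y_p)} × X 0). -/
def Gamma (X : ℕ → Type) (φs : ∀ n, X n → X (n + 1)) (πo : ∀ n, Y → X n → X (n + 1))
    (n : ℕ) (xn : X n) : Set (ℕ → Y) :=
  { y | ∀ p, ∀ h : n ≤ p, ∃ x0 : X 0, phiTo X φs h xn = piFin0 X πo p (fun i : Fin p => y i.1) x0 }

/-- The relation R on Y^ℕ: related iff equal or both in some Γ_n(x_n). -/
def simRel (X : ℕ → Type) (φs : ∀ n, X n → X (n + 1)) (πo : ∀ n, Y → X n → X (n + 1)) :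
    (ℕ → Y) → (ℕ → Y) → Prop :=
  fun a b => a = b ∨ ∃ n, ∃ xn : X n, a ∈ Gamma X φs πo n xn ∧ b ∈ Gamma X φs πo n xn

/-
Nonemptiness: every point of `X p` lies in some cell, and since `φ` commutes with the one-step
projections, `φ_p` maps the cell of a word `w` into the cell of some one-letter extension `w a`.
Starting from a cell of `x_n` and extending one letter at a time gives an infinite address in
`Γ_n(x_n)`. Closedness: `Γ_n(x_n)` is an intersection of preimages, under the continuous
restriction maps `Y^ℕ → Y^p`, of the sets `{w | φ_{p,n}(x_n) ∈ C(w)}`; each is the projection to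
`Y^p` of a closed subset of `Y^p × X₀`, hence closed because `X₀` is compact.
-/

namespace Fin

def seqOfExtend {α : Type*} {n : ℕ} (w₀ : Fin n → α) (next : ∀ p, (Fin p → α) → α) : ℕ → α
  | i => if h : i < n then w₀ ⟨i, h⟩ else next i fun j : Fin i => seqOfExtend w₀ next j
termination_by i => i
decreasing_by exact j.2

theorem exists_seq_of_forall_exists_snoc {α : Type*} {P : ∀ p, (Fin p → α) → Prop} {n : ℕ}
    (w₀ : Fin n → α) (h₀ : P n w₀)
    (hstep : ∀ p, n ≤ p → ∀ w, P p w → ∃ a, P (p + 1) (snoc w a)) :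
    ∃ y : ℕ → α, ∀ p, n ≤ p → P p fun i => y i := by
  have : Nonempty α := let ⟨a, _⟩ := hstep n le_rfl w₀ h₀; ⟨a⟩
  let next : ∀ p, (Fin p → α) → α := fun p w => Classical.epsilon fun a => P (p + 1) (snoc w a)
  let y := seqOfExtend w₀ next
  refine ⟨y, fun p hp => ?_⟩
  induction p, hp using Nat.le_induction with
  | base =>
    convert h₀ using 1
    funext i
    simp [y, seqOfExtend.eq_1 w₀ next i, i.2]
  | succ p hp ih =>
    have hy : y p = next p fun i : Fin p => y i := by
      rw [show y p = _ from seqOfExtend.eq_1 w₀ next p, dif_neg hp.not_gt]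
    rw [← snoc_init_self (fun i : Fin (p + 1) => y i)]
    exact hy ▸ Classical.epsilon_spec (hstep p hp _ ih)

end Fin

theorem phiTo_self {X : ℕ → Type} (φs : ∀ n, X n → X (n + 1)) {n : ℕ} (x : X n) :
    phiTo X φs le_rfl x = x :=
  Nat.leRecOn_self x

theorem phiTo_succ {X : ℕ → Type} (φs : ∀ n, X n → X (n + 1)) {n p : ℕ} (h : n ≤ p) (x : X n) :
    phiTo X φs (h.trans p.le_succ) x = φs p (phiTo X φs h x) :=
  Nat.leRecOn_succ h x

section Cells

variable {X : ℕ → Type} (πo : ∀ n, Y → X n → X (n + 1))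

theorem piFin0_cons {p : ℕ} (a : Y) (w : Fin p → Y) (x : X 0) :
    piFin0 X πo (p + 1) (Fin.cons a w) x = πo p a (piFin0 X πo p w x) :=
  rfl

theorem exists_eq_piFin0 (hπs : ∀ n, Function.Surjective fun p : Y × X n => πo n p.1 p.2) :
    ∀ p (z : X p), ∃ (w : Fin p → Y) (x0 : X 0), z = piFin0 X πo p w x0
  | 0, z => ⟨Fin.elim0, z, rfl⟩
  | p + 1, z => by
    obtain ⟨⟨a, x⟩, rfl⟩ := hπs p z
    obtain ⟨w, x0, rfl⟩ := exists_eq_piFin0 hπs p x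
    exact ⟨Fin.cons a w, x0, rfl⟩

theorem exists_map_piFin0_eq_piFin0_snoc (φs : ∀ n, X n → X (n + 1))
    (hπs : ∀ n, Function.Surjective fun p : Y × X n => πo n p.1 p.2)
    (hcomm : ∀ (n : ℕ) (y : Y) (x : X n), πo (n + 1) y (φs n x) = φs (n + 1) (πo n y x)) :
    ∀ p (w : Fin p → Y) (x0 : X 0), ∃ (a : Y) (x0' : X 0),
      φs p (piFin0 X πo p w x0) = piFin0 X πo (p + 1) (Fin.snoc w a) x0'
  | 0, w, x0 => by
    obtain ⟨⟨a, x0'⟩, h⟩ := hπs 0 (φs 0 x0)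
    exact ⟨a, x0', h.symm⟩
  | p + 1, w, x0 => by
    obtain ⟨a, x0', h⟩ := exists_map_piFin0_eq_piFin0_snoc φs hπs hcomm p (Fin.tail w) x0
    refine ⟨a, x0', ?_⟩
    rw [← Fin.cons_self_tail w, ← Fin.cons_snoc_eq_snoc_cons, piFin0_cons, piFin0_cons,
      ← hcomm, h]

variable [∀ n, TopologicalSpace (X n)] [TopologicalSpace Y]

theorem continuous_piFin0 (hπc : ∀ n, Continuous fun p : Y × X n => πo n p.1 p.2) :
    ∀ p, Continuous fun q : (Fin p → Y) × X 0 => piFin0 X πo p q.1 q.2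
  | 0 => continuous_snd
  | p + 1 => by
    have hprefix := (continuous_piFin0 hπc p).comp
      (by fun_prop : Continuous fun q : (Fin (p + 1) → Y) × X 0 => (Fin.tail q.1, q.2))
    exact (hπc p).comp (((continuous_apply 0).comp continuous_fst).prodMk hprefix)

theorem isClosed_setOf_exists_eq_piFin0 [CompactSpace (X 0)] [∀ n, T1Space (X n)]
    (hπc : ∀ n, Continuous fun p : Y × X n => πo n p.1 p.2) {p : ℕ} (z : X p) :
    IsClosed {w : Fin p → Y | ∃ x0 : X 0, z = piFin0 X πo p w x0} := by
  convert isClosedMap_fst_of_compactSpace _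
    ((isClosed_singleton (x := z)).preimage (continuous_piFin0 πo hπc p)) using 1
  ext w
  simp [eq_comm]

end Cells

variable {X : ℕ → Type}
  [TopologicalSpace Y] [CompactSpace Y] [T2Space Y]
  [∀ n, TopologicalSpace (X n)] [∀ n, CompactSpace (X n)] [∀ n, T2Space (X n)]

theorem statement_9_general
    (φs : ∀ n, X n → X (n + 1)) (πo : ∀ n, Y → X n → X (n + 1))
    (hπc : ∀ n, Continuous fun p : Y × X n => πo n p.1 p.2)
    (hπs : ∀ n, Function.Surjective fun p : Y × X n => πo n p.1 p.2)
    (hcomm : ∀ (n : ℕ) (y : Y) (x : X n), πo (n + 1) y (φs n x) = φs (n + 1) (πo n y x))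
    (n : ℕ) (xn : X n) :
    (Gamma X φs πo n xn).Nonempty ∧ IsClosed (Gamma X φs πo n xn) := by
  constructor
  · obtain ⟨w₀, x₀, h₀⟩ := exists_eq_piFin0 πo hπs n xn
    obtain ⟨y, hy⟩ := Fin.exists_seq_of_forall_exists_snoc
      (P := fun p w => ∀ h : n ≤ p, ∃ x0 : X 0, phiTo X φs h xn = piFin0 X πo p w x0) w₀
      (fun _ => ⟨x₀, (phiTo_self φs xn).trans h₀⟩) fun p hp w hw => by
        obtain ⟨x0, hx0⟩ := hw hp
        obtain ⟨a, x0', h⟩ := exists_map_piFin0_eq_piFin0_snoc πo φs hπs hcomm p w x0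
        exact ⟨a, fun _ => ⟨x0', by rw [phiTo_succ φs hp, hx0, h]⟩⟩
    exact ⟨y, fun p h => hy p h h⟩
  · simp only [Gamma, Set.ofPred_forall]
    exact isClosed_iInter fun p => isClosed_iInter fun h =>
      (isClosed_setOf_exists_eq_piFin0 πo hπc _).preimage (by fun_prop)

theorem statement_9
    (φs : ∀ n, X n → X (n + 1)) (πo : ∀ n, Y → X n → X (n + 1))
    (hφc : ∀ n, Continuous (φs n)) (hφi : ∀ n, Function.Injective (φs n))
    (hπc : ∀ n, Continuous fun p : Y × X n => πo n p.1 p.2)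
    (hπs : ∀ n, Function.Surjective fun p : Y × X n => πo n p.1 p.2)
    (hcomm : ∀ (n : ℕ) (y : Y) (x : X n), πo (n + 1) y (φs n x) = φs (n + 1) (πo n y x))
    (hquot : ∀ (n : ℕ) (y y' : Y) (ξ ξ' : X n), πo n y ξ = πo n y' ξ' → (y, ξ) ≠ (y', ξ') →
      ∃ x0 x0' : X 0, ξ = phiTo X φs (Nat.zero_le n) x0 ∧ ξ' = phiTo X φs (Nat.zero_le n) x0' ∧
        πo 0 y x0 = πo 0 y' x0')
    (n : ℕ) (xn : X n) :
    (Gamma X φs πo n xn).Nonempty ∧ IsClosed (Gamma X φs πo n xn) :=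
  statement_9_general φs πo hπc hπs hcomm n xn
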